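/- arXiv:1401.4233 — 2 statements merged into one kernel-verified Lean document; each statement's English description precedes it below -/
import Mathlib

section
/- Let x > 0 with x ≠ 1, let c > 0 and T > 0, and let I(x,T) = (1/(2πi)) ∫_{c−iT}^{c+iT} x^s/s ds (integral along the vertical segment from c−iT to c+iT). Then |I(x,T) − δ(x)| < x^c/(π T |log x|), where δ(x) = 0 if 0 < x < 1 and δ(x) = 1 if x > 1. -/
open Complex intervalIntegral Real Set Filter

lemma abs_add_mul_I' (σ t : ℝ) : ‖((σ:ℂ) + (t:ℝ)*Complex.I)‖ = Real.sqrt (σ^2 + t^2) := by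
  rw [Complex.norm_def, Complex.normSq_apply]; simp; ring_nf

lemma integral_const_rpow (y a b : ℝ) (hy : 0 < y) (hl : Real.log y ≠ 0) :
    ∫ σ in a..b, y ^ σ = (y ^ b - y ^ a) / Real.log y := by
  have h : ∀ σ ∈ Set.uIcc a b, HasDerivAt (fun u => y ^ u / Real.log y) (y ^ σ) σ := by
    intro σ _
    have := ((Real.hasStrictDerivAt_const_rpow hy σ).hasDerivAt).div_const (Real.log y)
    simpa [mul_div_assoc, mul_div_cancel_right₀ _ hl] using this
  have hi : IntervalIntegrable (fun σ => y ^ σ) MeasureTheory.volume a b :=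
    Continuous.intervalIntegrable (continuous_iff_continuousAt.2 fun _ => Real.continuousAt_const_rpow hy.ne') _ _
  rw [intervalIntegral.integral_eq_sub_of_hasDerivAt h hi]; ring

lemma rpow_integrable (y a b : ℝ) (hy : 0 < y) :
    IntervalIntegrable (fun σ => y ^ σ) MeasureTheory.volume a b :=
  Continuous.intervalIntegrable (continuous_iff_continuousAt.2 fun _ => Real.continuousAt_const_rpow hy.ne') _ _

lemma ne_zero_of_re (s : ℂ) (h : s.re ≠ 0) : s ≠ 0 := fun h0 => h (by simp [h0])
lemma ne_zero_of_im (s : ℂ) (h : s.im ≠ 0) : s ≠ 0 := fun h0 => h (by simp [h0])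

lemma diff_cpow_div (y : ℝ) (hy : 0 < y) :
    DifferentiableOn ℂ (fun s => (y:ℂ)^s / s) {s : ℂ | s ≠ 0} := by
  apply DifferentiableOn.div
  · exact (Differentiable.const_cpow differentiable_id (Or.inl (by exact_mod_cast hy.ne'))).differentiableOn
  · exact differentiableOn_id
  · exact fun s hs => hs

lemma cont_aux (y : ℝ) (hy : 0 < y) (g : ℝ → ℂ) (hg : Continuous g) (hgz : ∀ u, g u ≠ 0) :
    Continuous (fun u : ℝ => (y:ℂ) ^ (g u) / (g u)) := by
  apply Continuous.div
  · exact Continuous.const_cpow hg (Or.inl (by exact_mod_cast hy.ne'))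
  · exact hg
  · exact hgz

lemma abs_f_eq (y σ t : ℝ) (hy : 0 < y) :
    ‖((y:ℂ) ^ ((σ:ℂ) + (t:ℝ)*Complex.I) / ((σ:ℂ) + (t:ℝ)*Complex.I))‖
      = y ^ σ / Real.sqrt (σ^2 + t^2) := by
  rw [norm_div, Complex.norm_cpow_eq_rpow_re_of_pos hy, abs_add_mul_I']
  norm_num

lemma vertA (y c T : ℝ) (hy0 : 0 < y) (hy1 : y < 1) (hc : 0 < c) (hT : 0 < T) :
    ‖(∫ t in (-T)..T, Complex.I *
        ((y:ℂ) ^ ((c:ℂ) + t * Complex.I) / ((c:ℂ) + t * Complex.I)))‖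
      ≤ 2 * y ^ c / (|Real.log y| * Real.sqrt (c ^ 2 + T ^ 2)) := by
  set f : ℂ → ℂ := fun s => (y:ℂ)^s / s with hf
  set K := Real.sqrt (c^2 + T^2) with hKdef
  have hK : 0 < K := Real.sqrt_pos.2 (by positivity)
  have hly : Real.log y < 0 := Real.log_neg hy0 hy1
  have habs : |Real.log y| = -Real.log y := abs_of_neg hly
  set A := 2 * y ^ c / (|Real.log y| * K) with hA
  -- rewrite LHS
  rw [intervalIntegral.integral_const_mul, norm_mul, Complex.norm_I, one_mul]
  -- main bound for each R
  have key : ∀ R : ℝ, c ≤ R →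
      ‖(∫ t in (-T)..T, f ((c:ℝ) + (t:ℝ)*Complex.I))‖ ≤ A + 2*T*(y^R/c) := by
    intro R hcR
    have hrect := Complex.integral_boundary_rect_eq_zero_of_differentiableOn f
      ⟨c, -T⟩ ⟨R, T⟩ (by
        apply (diff_cpow_div y hy0).mono
        intro s hs
        rw [Complex.mem_reProdIm] at hs
        have h1 : s.re ∈ Set.uIcc c R := hs.1
        rw [Set.uIcc_of_le hcR] at h1
        exact ne_zero_of_re s (ne_of_gt (lt_of_lt_of_le hc h1.1)))
    dsimp only at hrect
    have heq : (∫ t in (-T)..T, f ((c:ℝ) + (t:ℝ)*Complex.I))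
        = Complex.I⁻¹ • ((∫ x : ℝ in c..R, f ((x:ℝ) + (-T:ℝ)*Complex.I))
          - (∫ x : ℝ in c..R, f ((x:ℝ) + (T:ℝ)*Complex.I))
          + Complex.I • (∫ t in (-T)..T, f ((R:ℝ) + (t:ℝ)*Complex.I))) := by
      have h2 := sub_eq_zero.mp hrect
      rw [h2, smul_smul, inv_mul_cancel₀ Complex.I_ne_zero, one_smul]
    rw [heq]
    have hKle : ∀ σ t : ℝ, c ≤ σ → t^2 = T^2 → K ≤ Real.sqrt (σ^2 + t^2) := by
      intro σ t hσ ht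
      apply Real.sqrt_le_sqrt
      nlinarith
    -- horizontal bound
    have hhoriz : ∀ t0 : ℝ, t0^2 = T^2 →
        ‖(∫ x : ℝ in c..R, f ((x:ℝ) + (t0:ℝ)*Complex.I))‖ ≤ y^c / (|Real.log y| * K) := by
      intro t0 ht0
      have ht0ne : t0 ≠ 0 := by intro h; rw [h] at ht0; nlinarith
      have hcont : Continuous (fun x : ℝ => f ((x:ℝ) + (t0:ℝ)*Complex.I)) := by
        apply cont_aux y hy0 _ (by continuity)
        intro u; apply ne_zero_of_im; simp [ht0ne]
      calc ‖(∫ x : ℝ in c..R, f ((x:ℝ) + (t0:ℝ)*Complex.I))‖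
          ≤ ∫ x : ℝ in c..R, ‖(f ((x:ℝ) + (t0:ℝ)*Complex.I))‖ := by
            simpa using intervalIntegral.norm_integral_le_integral_norm (f := fun x : ℝ => f ((x:ℝ) + (t0:ℝ)*Complex.I)) hcR
        _ ≤ ∫ x : ℝ in c..R, y ^ x / K := by
            apply intervalIntegral.integral_mono_on hcR
            · exact (hcont.norm.intervalIntegrable _ _)
            · exact ((rpow_integrable y c R hy0).div_const K)
            · intro x hx
              rw [hf]
              simp only []
              rw [abs_f_eq y x t0 hy0]
              gcongr
              exact hKle x t0 hx.1 ht0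
        _ = (∫ x : ℝ in c..R, y ^ x) / K := by rw [intervalIntegral.integral_div]
        _ ≤ (y ^ c / |Real.log y|) / K := by
            gcongr
            have hyR : (0:ℝ) < y ^ R := Real.rpow_pos_of_pos hy0 R
            have hflip : (y^R - y^c)/Real.log y = (y^c - y^R)/(-Real.log y) := by
              rw [div_eq_div_iff hly.ne (neg_ne_zero.2 hly.ne)]; ring
            rw [integral_const_rpow y c R hy0 hly.ne, habs, hflip]
            gcongr
            · linarith
            · linarith
        _ = y ^ c / (|Real.log y| * K) := by rw [div_div]
    -- right vertical bound
    have hvert : ‖(∫ t in (-T)..T, f ((R:ℝ) + (t:ℝ)*Complex.I))‖ ≤ y^R/c * (2*T) := by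
      have hRpos : 0 < R := lt_of_lt_of_le hc hcR
      have := intervalIntegral.norm_integral_le_of_norm_le_const
        (f := fun t : ℝ => f ((R:ℝ) + (t:ℝ)*Complex.I)) (C := y^R/c) (a := -T) (b := T) ?_
      · calc ‖(∫ t in (-T)..T, f ((R:ℝ) + (t:ℝ)*Complex.I))‖ ≤ y^R/c * |T - (-T)| := this
          _ = y^R/c * (2*T) := by rw [abs_of_pos (by linarith)]; ring
      · intro t _
        show ‖f ((R:ℝ) + (t:ℝ)*Complex.I)‖ ≤ y^R/c
        rw [hf]; simp only []
        rw [abs_f_eq y R t hy0]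
        apply div_le_div₀ (Real.rpow_nonneg hy0.le R) le_rfl hc
        calc c ≤ R := hcR
          _ = Real.sqrt (R^2) := (Real.sqrt_sq hRpos.le).symm
          _ ≤ Real.sqrt (R^2 + t^2) := Real.sqrt_le_sqrt (by nlinarith)
    calc ‖(Complex.I⁻¹ • ((∫ x : ℝ in c..R, f ((x:ℝ) + (-T:ℝ)*Complex.I))
          - (∫ x : ℝ in c..R, f ((x:ℝ) + (T:ℝ)*Complex.I))
          + Complex.I • (∫ t in (-T)..T, f ((R:ℝ) + (t:ℝ)*Complex.I))))‖
        ≤ ‖(∫ x : ℝ in c..R, f ((x:ℝ) + (-T:ℝ)*Complex.I))‖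
          + ‖(∫ x : ℝ in c..R, f ((x:ℝ) + (T:ℝ)*Complex.I))‖
          + ‖(∫ t in (-T)..T, f ((R:ℝ) + (t:ℝ)*Complex.I))‖ := by
          rw [smul_eq_mul, smul_eq_mul, norm_mul, norm_inv, Complex.norm_I, inv_one, one_mul]
          calc ‖_‖ ≤ ‖((∫ x : ℝ in c..R, f ((x:ℝ) + (-T:ℝ)*Complex.I))
                - (∫ x : ℝ in c..R, f ((x:ℝ) + (T:ℝ)*Complex.I)))‖
              + ‖(Complex.I * (∫ t in (-T)..T, f ((R:ℝ) + (t:ℝ)*Complex.I)))‖ := by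
                exact norm_add_le _ _
            _ ≤ _ := by
              rw [norm_mul, Complex.norm_I, one_mul]
              have := norm_sub_le (∫ x : ℝ in c..R, f ((x:ℝ) + (-T:ℝ)*Complex.I)) (∫ x : ℝ in c..R, f ((x:ℝ) + (T:ℝ)*Complex.I))
              linarith
      _ ≤ y ^ c / (|Real.log y| * K) + y ^ c / (|Real.log y| * K) + y^R/c*(2*T) := by
          have h1 := hhoriz (-T) (by ring)
          have h2 := hhoriz T rfl
          linarith
      _ = A + 2*T*(y^R/c) := by rw [hA]; ring
  -- take R → ∞
  have htend : Tendsto (fun R : ℝ => A + 2*T*(y^R/c)) atTop (nhds (A + 2*T*(0/c))) := by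
    apply Tendsto.const_add
    apply Tendsto.const_mul
    exact (tendsto_rpow_atTop_of_base_lt_one y (by linarith) hy1).div_const c
  have : A + 2*T*((0:ℝ)/c) = A := by ring
  rw [this] at htend
  exact ge_of_tendsto htend (Filter.eventually_atTop.2 ⟨c, fun R hR => key R hR⟩)

lemma ne_zero_of_re' (s : ℂ) (h : s.re ≠ 0) : s ≠ 0 := fun h0 => h (by simp [h0])
lemma ne_zero_of_im' (s : ℂ) (h : s.im ≠ 0) : s ≠ 0 := fun h0 => h (by simp [h0])

lemma inv_horiz_cont (t0 : ℝ) (ht0 : t0 ≠ 0) :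
    Continuous (fun σ : ℝ => ((σ:ℂ) + (t0:ℝ)*Complex.I)⁻¹) := by
  apply Continuous.inv₀ (by continuity)
  intro σ; apply ne_zero_of_im'; simp [ht0]

lemma inv_vert_cont (a : ℝ) (ha : a ≠ 0) :
    Continuous (fun t : ℝ => ((a:ℂ) + (t:ℝ)*Complex.I)⁻¹) := by
  apply Continuous.inv₀ (by continuity)
  intro t; apply ne_zero_of_re'; simp [ha]

lemma integral_inv_horiz (a b t0 : ℝ) (ht0 : t0 ≠ 0) :
    ∫ σ in a..b, ((σ:ℂ) + (t0:ℝ)*Complex.I)⁻¹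
      = Complex.log ((b:ℂ) + (t0:ℝ)*Complex.I) - Complex.log ((a:ℂ) + (t0:ℝ)*Complex.I) := by
  apply intervalIntegral.integral_eq_sub_of_hasDerivAt
  · intro σ _
    have hmem : ((σ:ℂ) + (t0:ℝ)*Complex.I) ∈ Complex.slitPlane := Or.inr (by simp [ht0])
    have h1 : HasDerivAt (fun z : ℂ => Complex.log (z + (t0:ℝ)*Complex.I))
        (((σ:ℂ) + (t0:ℝ)*Complex.I)⁻¹) ((σ:ℝ):ℂ) := by
      simpa [Function.comp_def] using (Complex.hasDerivAt_log hmem).comp ((σ:ℝ):ℂ) ((hasDerivAt_id _).add_const ((t0:ℝ)*Complex.I : ℂ))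
    exact h1.comp_ofReal
  · exact (inv_horiz_cont t0 ht0).intervalIntegrable _ _

lemma integral_inv_vert_pos (c a b : ℝ) (hc : 0 < c) :
    ∫ t in a..b, ((c:ℂ) + (t:ℝ)*Complex.I)⁻¹
      = -Complex.I * (Complex.log ((c:ℂ) + (b:ℝ)*Complex.I) - Complex.log ((c:ℂ) + (a:ℝ)*Complex.I)) := by
  rw [show -Complex.I * (Complex.log ((c:ℂ) + (b:ℝ)*Complex.I) - Complex.log ((c:ℂ) + (a:ℝ)*Complex.I))
      = (-Complex.I * Complex.log ((c:ℂ) + (b:ℝ)*Complex.I)) - (-Complex.I * Complex.log ((c:ℂ) + (a:ℝ)*Complex.I)) by ring]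
  apply intervalIntegral.integral_eq_sub_of_hasDerivAt
  · intro t _
    have hmem : ((c:ℂ) + (t:ℝ)*Complex.I) ∈ Complex.slitPlane := Or.inl (by simp [hc])
    have h1 : HasDerivAt (fun z : ℂ => -Complex.I * Complex.log ((c:ℂ) + z*Complex.I))
        (((c:ℂ) + (t:ℝ)*Complex.I)⁻¹) ((t:ℝ):ℂ) := by
      have h2 := ((Complex.hasDerivAt_log hmem).comp ((t:ℝ):ℂ)
        (((hasDerivAt_id ((t:ℝ):ℂ)).mul_const Complex.I).const_add ((c:ℝ):ℂ))).const_mul (-Complex.I)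
      rw [show (((c:ℂ) + (t:ℂ)*Complex.I)⁻¹) = -Complex.I * ((((c:ℂ) + (t:ℂ)*Complex.I))⁻¹ * (1 * Complex.I)) by
        linear_combination ((c:ℂ) + (t:ℂ)*Complex.I)⁻¹ * Complex.I_mul_I]
      exact h2
    exact h1.comp_ofReal
  · exact (inv_vert_cont c hc.ne').intervalIntegrable _ _

lemma integral_inv_vert_neg (c a b : ℝ) (hc : 0 < c) :
    ∫ t in a..b, (((-c:ℝ):ℂ) + (t:ℝ)*Complex.I)⁻¹
      = Complex.I * (Complex.log ((c:ℂ) + (-a:ℝ)*Complex.I) - Complex.log ((c:ℂ) + (-b:ℝ)*Complex.I)) := by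
  have key : ∀ t : ℝ, (((-c:ℝ):ℂ) + (t:ℝ)*Complex.I)⁻¹ = -(((c:ℂ) + (-t:ℝ)*Complex.I)⁻¹) := by
    intro t
    rw [← inv_neg]
    congr 1
    push_cast
    ring
  rw [intervalIntegral.integral_congr (g := fun t : ℝ => -(((c:ℂ) + (-t:ℝ)*Complex.I)⁻¹)) (fun t _ => key t)]
  rw [intervalIntegral.integral_neg]
  have h3 : (∫ t in a..b, ((c:ℂ) + ((-t:ℝ):ℝ)*Complex.I)⁻¹)
      = ∫ t in (-b)..(-a), ((c:ℂ) + (t:ℝ)*Complex.I)⁻¹ :=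
    intervalIntegral.integral_comp_neg (fun t : ℝ => ((c:ℂ) + (t:ℝ)*Complex.I)⁻¹)
  rw [h3, integral_inv_vert_pos c (-b) (-a) hc]
  ring

lemma rect_inv (c T : ℝ) (hc : 0 < c) (hT : 0 < T) :
    (∫ σ in (-c)..c, ((σ:ℂ) + ((-T:ℝ))*Complex.I)⁻¹)
      - (∫ σ in (-c)..c, ((σ:ℂ) + (T:ℝ)*Complex.I)⁻¹)
      + Complex.I • (∫ t in (-T)..T, ((c:ℂ) + (t:ℝ)*Complex.I)⁻¹)
      - Complex.I • (∫ t in (-T)..T, (((-c:ℝ):ℂ) + (t:ℝ)*Complex.I)⁻¹)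
      = 2*Real.pi*Complex.I := by
  rw [integral_inv_horiz (-c) c (-T) (by linarith), integral_inv_horiz (-c) c T hT.ne',
      integral_inv_vert_pos c (-T) T hc, integral_inv_vert_neg c (-T) T hc]
  simp only [neg_neg]
  set z1 := (c:ℂ) + (T:ℝ)*Complex.I with hz1
  set z2 := ((-c:ℝ):ℂ) + (T:ℝ)*Complex.I with hz2
  have him1 : z1.im = T := by simp [hz1]
  have him2 : z2.im = T := by simp [hz2]
  have harg1 : z1.arg ≠ π := fun h => hT.ne' (by have := (Complex.arg_eq_pi_iff.1 h).2; rw [him1] at this; exact this.symm ▸ rfl)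
  have harg2 : z2.arg ≠ π := fun h => hT.ne' (by have := (Complex.arg_eq_pi_iff.1 h).2; rw [him2] at this; exact this.symm ▸ rfl)
  have hc1 : ((c:ℂ) + ((-T:ℝ):ℝ)*Complex.I) = (starRingEnd ℂ) z1 := by
    apply Complex.ext <;> simp [hz1]
  have hc2 : (((-c:ℝ):ℂ) + ((-T:ℝ):ℝ)*Complex.I) = (starRingEnd ℂ) z2 := by
    apply Complex.ext <;> simp [hz2]
  rw [hc1, hc2, Complex.log_conj _ harg1, Complex.log_conj _ harg2]
  have hs1 : Complex.log z1 - (starRingEnd ℂ) (Complex.log z1) = ((2 * z1.arg : ℝ):ℂ) * Complex.I := by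
    rw [Complex.sub_conj, Complex.log_im]
  have hs2 : Complex.log z2 - (starRingEnd ℂ) (Complex.log z2) = ((2 * z2.arg : ℝ):ℂ) * Complex.I := by
    rw [Complex.sub_conj, Complex.log_im]
  have hargsum : z2.arg = π - z1.arg := by
    have hz2e : z2 = -((starRingEnd ℂ) z1) := by apply Complex.ext <;> simp [hz1, hz2]
    have him : ((starRingEnd ℂ) z1).im < 0 := by simp [hz1]; exact hT
    rw [hz2e, Complex.arg_neg_eq_arg_add_pi_of_im_neg him, Complex.arg_conj, if_neg harg1]
    ring
  have expand : ∀ A B : ℂ, (starRingEnd ℂ) A - (starRingEnd ℂ) B - (A - B)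
      + Complex.I • (-Complex.I * (A - (starRingEnd ℂ) A)) - Complex.I • (Complex.I * (A - (starRingEnd ℂ) A))
      = (A - (starRingEnd ℂ) A) + (B - (starRingEnd ℂ) B) := by
    intro A B
    simp only [smul_eq_mul]
    have := Complex.I_mul_I
    linear_combination (2*((starRingEnd ℂ) A) - 2*A) * Complex.I_mul_I
  rw [expand (Complex.log z1) (Complex.log z2), hs1, hs2, hargsum]
  push_cast
  ring

lemma cont_aux2 (y : ℝ) (hy : 0 < y) (g : ℝ → ℂ) (hg : Continuous g) (hgz : ∀ u, g u ≠ 0) :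
    Continuous (fun u : ℝ => (y:ℂ) ^ (g u) / (g u)) := by
  apply Continuous.div
  · exact Continuous.const_cpow hg (Or.inl (by exact_mod_cast hy.ne'))
  · exact hg
  · exact hgz

lemma rectB (x c T : ℝ) (hx : 0 < x) (hc : 0 < c) (hT : 0 < T) :
    (∫ σ in (-c)..c, (x:ℂ)^((σ:ℂ) + ((-T:ℝ))*Complex.I)/((σ:ℂ) + ((-T:ℝ))*Complex.I))
      - (∫ σ in (-c)..c, (x:ℂ)^((σ:ℂ) + (T:ℝ)*Complex.I)/((σ:ℂ) + (T:ℝ)*Complex.I))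
      + Complex.I • (∫ t in (-T)..T, (x:ℂ)^((c:ℂ) + (t:ℝ)*Complex.I)/((c:ℂ) + (t:ℝ)*Complex.I))
      - Complex.I • (∫ t in (-T)..T, (x:ℂ)^(((-c:ℝ):ℂ) + (t:ℝ)*Complex.I)/(((-c:ℝ):ℂ) + (t:ℝ)*Complex.I))
      = 2*Real.pi*Complex.I := by
  have hxne : (x:ℂ) ≠ 0 := by exact_mod_cast hx.ne'
  set g := dslope (fun s : ℂ => (x:ℂ)^s) 0 with hg
  have hgd : DifferentiableOn ℂ g Set.univ :=
    (Complex.differentiableOn_dslope (Filter.univ_mem)).2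
      ((Differentiable.const_cpow differentiable_id (Or.inl hxne)).differentiableOn)
  have hrect := Complex.integral_boundary_rect_eq_zero_of_differentiableOn g ⟨-c,-T⟩ ⟨c,T⟩
    (hgd.mono (Set.subset_univ _))
  dsimp only at hrect
  have hgeq : ∀ s : ℂ, s ≠ 0 → g s = (x:ℂ)^s/s - s⁻¹ := by
    intro s hs
    rw [hg, dslope_of_ne _ hs, slope_def_field, Complex.cpow_zero, sub_zero, sub_div]
    rw [one_div]
  have hside : ∀ (p : ℝ → ℂ) (a b : ℝ), Continuous p → (∀ u, p u ≠ 0) →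
      (∫ u in a..b, g (p u)) = (∫ u in a..b, (x:ℂ)^(p u)/(p u)) - ∫ u in a..b, (p u)⁻¹ := by
    intro p a b hp hpz
    rw [intervalIntegral.integral_congr (g := fun u => (x:ℂ)^(p u)/(p u) - (p u)⁻¹)
      (fun u _ => hgeq (p u) (hpz u))]
    exact intervalIntegral.integral_sub
      ((cont_aux2 x hx p hp hpz).intervalIntegrable _ _)
      ((hp.inv₀ hpz).intervalIntegrable _ _)
  have chor : ∀ t0 : ℝ, Continuous (fun σ : ℝ => (σ:ℂ) + ((t0:ℝ):ℂ)*Complex.I) :=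
    fun t0 => Complex.continuous_ofReal.add continuous_const
  have cver : ∀ a : ℝ, Continuous (fun t : ℝ => ((a:ℝ):ℂ) + (t:ℝ)*Complex.I) :=
    fun a => continuous_const.add (Complex.continuous_ofReal.mul continuous_const)
  have hbot := hside (fun σ : ℝ => (σ:ℂ) + ((-T:ℝ))*Complex.I) (-c) c (chor (-T))
    (fun u => ne_zero_of_im' _ (by simp; linarith))
  have htop := hside (fun σ : ℝ => (σ:ℂ) + (T:ℝ)*Complex.I) (-c) c (chor T)
    (fun u => ne_zero_of_im' _ (by simp; linarith))
  have hright := hside (fun t : ℝ => ((c:ℝ):ℂ) + (t:ℝ)*Complex.I) (-T) T (cver c)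
    (fun u => ne_zero_of_re' _ (by simp; linarith))
  have hleft := hside (fun t : ℝ => ((-c:ℝ):ℂ) + (t:ℝ)*Complex.I) (-T) T (cver (-c))
    (fun u => ne_zero_of_re' _ (by simp; linarith))
  rw [hbot, htop, hright, hleft] at hrect
  have hinv := rect_inv c T hc hT
  simp only [smul_eq_mul] at hrect hinv ⊢
  linear_combination hrect + hinv

lemma horizB (x c T t0 : ℝ) (hx : 1 < x) (hc : 0 < c) (hT : 0 < T) (ht0 : t0^2 = T^2) :
    ‖(∫ σ in (-c:ℝ)..c, (x:ℂ)^((σ:ℂ) + ((t0:ℝ))*Complex.I)/((σ:ℂ) + ((t0:ℝ))*Complex.I))‖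
      ≤ (x^c - x^(-c:ℝ))/(Real.log x * T) := by
  have hx0 : (0:ℝ) < x := by linarith
  have hlx : 0 < Real.log x := Real.log_pos hx
  have ht0ne : t0 ≠ 0 := by intro h; rw [h] at ht0; nlinarith
  have hcont : Continuous (fun σ : ℝ => (x:ℂ)^((σ:ℂ) + ((t0:ℝ))*Complex.I)/((σ:ℂ) + ((t0:ℝ))*Complex.I)) := by
    apply cont_aux2 x hx0 _ (Complex.continuous_ofReal.add continuous_const)
    intro u; exact ne_zero_of_im' _ (by simp [ht0ne])
  calc ‖(∫ σ in (-c:ℝ)..c, (x:ℂ)^((σ:ℂ) + ((t0:ℝ))*Complex.I)/((σ:ℂ) + ((t0:ℝ))*Complex.I))‖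
      ≤ ∫ σ in (-c:ℝ)..c, ‖((x:ℂ)^((σ:ℂ) + ((t0:ℝ))*Complex.I)/((σ:ℂ) + ((t0:ℝ))*Complex.I))‖ := by
        simpa using intervalIntegral.norm_integral_le_integral_norm
          (f := fun σ : ℝ => (x:ℂ)^((σ:ℂ) + ((t0:ℝ))*Complex.I)/((σ:ℂ) + ((t0:ℝ))*Complex.I)) (by linarith : (-c:ℝ) ≤ c)
    _ ≤ ∫ σ in (-c:ℝ)..c, x ^ σ / T := by
        apply intervalIntegral.integral_mono_on (by linarith)
        · exact hcont.norm.intervalIntegrable _ _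
        · exact (rpow_integrable x (-c) c hx0).div_const T
        · intro σ _
          rw [abs_f_eq x σ t0 hx0]
          gcongr
          calc T = Real.sqrt (t0^2) := by rw [ht0, Real.sqrt_sq hT.le]
              _ ≤ Real.sqrt (σ^2 + t0^2) := Real.sqrt_le_sqrt (by nlinarith)
    _ = (∫ σ in (-c:ℝ)..c, x ^ σ) / T := by rw [intervalIntegral.integral_div]
    _ = (x^c - x^(-c:ℝ))/(Real.log x * T) := by
        rw [integral_const_rpow x (-c) c hx0 hlx.ne', div_div]

set_option maxHeartbeats 1000000 in
open Complex in
theorem truncated_perron_delta (x c T : ℝ) (hx : x > 0) (hx1 : x ≠ 1)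
    (hc : c > 0) (hT : T > 0) :
    ‖((2 * Real.pi * Complex.I)⁻¹ *
        (∫ t in (-T)..T, Complex.I *
          ((x : ℂ) ^ ((c : ℂ) + t * Complex.I) / ((c : ℂ) + t * Complex.I)))
        - (if x < 1 then (0 : ℂ) else 1))‖
      < x ^ c / (Real.pi * T * |Real.log x|) := by
  have hπ : (0:ℝ) < Real.pi := Real.pi_pos
  have hK : 0 < Real.sqrt (c^2 + T^2) := Real.sqrt_pos.2 (by positivity)
  have hTK : T < Real.sqrt (c^2 + T^2) := by
    calc T = Real.sqrt (T^2) := by rw [Real.sqrt_sq hT.le]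
      _ < Real.sqrt (c^2 + T^2) := Real.sqrt_lt_sqrt (by positivity) (by nlinarith)
  have hxc : (0:ℝ) < x ^ c := Real.rpow_pos_of_pos hx c
  have habs2pi : ‖((2 * (Real.pi:ℝ) * Complex.I)⁻¹)‖ = (2*Real.pi)⁻¹ := by
    rw [norm_inv]
    rw [norm_mul, norm_mul, Complex.norm_I, Complex.norm_real, Real.norm_eq_abs, abs_of_pos hπ]
    norm_num
  set J := ∫ t in (-T)..T, Complex.I *
      ((x : ℂ) ^ ((c : ℂ) + t * Complex.I) / ((c : ℂ) + t * Complex.I)) with hJ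
  rcases lt_or_gt_of_ne hx1 with hxlt | hxgt
  · -- 0 < x < 1
    have hl : Real.log x < 0 := Real.log_neg hx hxlt
    have hlabs : 0 < |Real.log x| := abs_pos.2 hl.ne
    rw [if_pos hxlt, sub_zero, norm_mul, habs2pi]
    have hJb := vertA x c T hx hxlt hc hT
    calc (2*Real.pi)⁻¹ * ‖J‖
        ≤ (2*Real.pi)⁻¹ * (2 * x ^ c / (|Real.log x| * Real.sqrt (c ^ 2 + T ^ 2))) := by
          apply mul_le_mul_of_nonneg_left hJb (by positivity)
      _ = x ^ c / (Real.pi * |Real.log x| * Real.sqrt (c ^ 2 + T ^ 2)) := by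
          field_simp
      _ < x ^ c / (Real.pi * T * |Real.log x|) := by
          apply div_lt_div_of_pos_left hxc (by positivity)
          calc Real.pi * T * |Real.log x| = Real.pi * |Real.log x| * T := by ring
            _ < Real.pi * |Real.log x| * Real.sqrt (c^2+T^2) := by
                apply mul_lt_mul_of_pos_left hTK (by positivity)
  · -- x > 1
    have hl : 0 < Real.log x := Real.log_pos hxgt
    have hlabs : |Real.log x| = Real.log x := abs_of_pos hl
    rw [if_neg (by linarith)]
    have h2pine : (2 * (Real.pi:ℝ) * Complex.I : ℂ) ≠ 0 := by
      simp [Complex.ext_iff, hπ.ne']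
    have hfact : (2 * (Real.pi:ℝ) * Complex.I)⁻¹ * J - 1
        = (2 * (Real.pi:ℝ) * Complex.I)⁻¹ * (J - 2 * (Real.pi:ℝ) * Complex.I) := by
      field_simp
    rw [hfact, norm_mul, habs2pi]
    -- J = I * right
    have hJr : J = Complex.I * ∫ t in (-T)..T,
        (x : ℂ) ^ ((c : ℂ) + t * Complex.I) / ((c : ℂ) + t * Complex.I) := by
      rw [hJ, intervalIntegral.integral_const_mul]
    have hrect := rectB x c T hx hc hT
    simp only [smul_eq_mul] at hrect
    -- left vertical equals -(1/x integral)
    have hxarg : Complex.arg (x:ℂ) ≠ Real.pi := by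
      rw [Complex.arg_ofReal_of_nonneg hx.le]
      exact (Real.pi_ne_zero).symm
    have hpt : ∀ t : ℝ, ((x⁻¹:ℝ):ℂ)^((c:ℂ)+(t:ℝ)*Complex.I)/((c:ℂ)+(t:ℝ)*Complex.I)
        = -((x:ℂ)^(((-c:ℝ):ℂ) + ((-t:ℝ))*Complex.I)/(((-c:ℝ):ℂ) + ((-t:ℝ))*Complex.I)) := by
      intro t
      have hs : (((-c:ℝ):ℂ) + ((-t:ℝ))*Complex.I : ℂ) = -((c:ℂ) + (t:ℝ)*Complex.I) := by
        push_cast; ring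
      rw [hs, Complex.cpow_neg, Complex.ofReal_inv, Complex.inv_cpow _ _ hxarg, div_neg, neg_neg]
    have hleftflip : (∫ t in (-T)..T, (x:ℂ)^(((-c:ℝ):ℂ) + (t:ℝ)*Complex.I)/(((-c:ℝ):ℂ) + (t:ℝ)*Complex.I))
        = -(∫ t in (-T)..T, ((x⁻¹:ℝ):ℂ)^((c:ℂ)+(t:ℝ)*Complex.I)/((c:ℂ)+(t:ℝ)*Complex.I)) := by
      rw [intervalIntegral.integral_congr (g := fun t : ℝ =>
        -((x:ℂ)^(((-c:ℝ):ℂ) + ((-t:ℝ))*Complex.I)/(((-c:ℝ):ℂ) + ((-t:ℝ))*Complex.I))) (fun t _ => hpt t)]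
      rw [intervalIntegral.integral_neg, neg_neg]
      have hcn := intervalIntegral.integral_comp_neg (a := -T) (b := T) (fun t : ℝ =>
        (x:ℂ)^(((-c:ℝ):ℂ) + (t:ℝ)*Complex.I)/(((-c:ℝ):ℂ) + (t:ℝ)*Complex.I))
      rw [neg_neg] at hcn
      exact hcn.symm
    -- bound on the 1/x vertical integral
    have hxinv0 : (0:ℝ) < x⁻¹ := by positivity
    have hxinv1 : x⁻¹ < 1 := by rw [inv_lt_one_iff₀]; right; exact hxgt
    have hvb := vertA x⁻¹ c T hxinv0 hxinv1 hc hT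
    rw [intervalIntegral.integral_const_mul, norm_mul, Complex.norm_I, one_mul] at hvb
    have hloginv : |Real.log x⁻¹| = Real.log x := by
      rw [Real.log_inv, abs_neg, hlabs]
    have hxinvc : (x⁻¹:ℝ) ^ c = x ^ (-c:ℝ) := by
      rw [Real.inv_rpow hx.le, Real.rpow_neg hx.le]
    rw [hloginv, hxinvc] at hvb
    -- combine
    have hmain : ‖(J - 2 * (Real.pi:ℝ) * Complex.I)‖
        ≤ (x^c - x^(-c:ℝ))/(Real.log x * T) + (x^c - x^(-c:ℝ))/(Real.log x * T)
          + 2 * x ^ (-c:ℝ) / (Real.log x * Real.sqrt (c ^ 2 + T ^ 2)) := by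
      have hkey : J - 2 * (Real.pi:ℝ) * Complex.I
          = (∫ σ in (-c:ℝ)..c, (x:ℂ)^((σ:ℂ) + ((T:ℝ))*Complex.I)/((σ:ℂ) + ((T:ℝ))*Complex.I))
            - (∫ σ in (-c:ℝ)..c, (x:ℂ)^((σ:ℂ) + ((-T:ℝ))*Complex.I)/((σ:ℂ) + ((-T:ℝ))*Complex.I))
            + Complex.I * (∫ t in (-T)..T, (x:ℂ)^(((-c:ℝ):ℂ) + (t:ℝ)*Complex.I)/(((-c:ℝ):ℂ) + (t:ℝ)*Complex.I)) := by
        rw [hJr]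
        linear_combination hrect
      rw [hkey, hleftflip]
      calc ‖_‖
          ≤ ‖((∫ σ in (-c:ℝ)..c, (x:ℂ)^((σ:ℂ) + ((T:ℝ))*Complex.I)/((σ:ℂ) + ((T:ℝ))*Complex.I))
              - (∫ σ in (-c:ℝ)..c, (x:ℂ)^((σ:ℂ) + ((-T:ℝ))*Complex.I)/((σ:ℂ) + ((-T:ℝ))*Complex.I)))‖
            + ‖(Complex.I * -(∫ t in (-T)..T, ((x⁻¹:ℝ):ℂ)^((c:ℂ)+(t:ℝ)*Complex.I)/((c:ℂ)+(t:ℝ)*Complex.I)))‖ :=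
            norm_add_le _ _
        _ ≤ (‖(∫ σ in (-c:ℝ)..c, (x:ℂ)^((σ:ℂ) + ((T:ℝ))*Complex.I)/((σ:ℂ) + ((T:ℝ))*Complex.I))‖
              + ‖(∫ σ in (-c:ℝ)..c, (x:ℂ)^((σ:ℂ) + ((-T:ℝ))*Complex.I)/((σ:ℂ) + ((-T:ℝ))*Complex.I))‖)
            + ‖(∫ t in (-T)..T, ((x⁻¹:ℝ):ℂ)^((c:ℂ)+(t:ℝ)*Complex.I)/((c:ℂ)+(t:ℝ)*Complex.I))‖ := by
            rw [norm_mul, Complex.norm_I, one_mul, norm_neg]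
            have := norm_sub_le
              (∫ σ in (-c:ℝ)..c, (x:ℂ)^((σ:ℂ) + ((T:ℝ))*Complex.I)/((σ:ℂ) + ((T:ℝ))*Complex.I))
              (∫ σ in (-c:ℝ)..c, (x:ℂ)^((σ:ℂ) + ((-T:ℝ))*Complex.I)/((σ:ℂ) + ((-T:ℝ))*Complex.I))
            linarith
        _ ≤ (x^c - x^(-c:ℝ))/(Real.log x * T) + (x^c - x^(-c:ℝ))/(Real.log x * T)
            + 2 * x ^ (-c:ℝ) / (Real.log x * Real.sqrt (c ^ 2 + T ^ 2)) := by
            have h1 := horizB x c T T hxgt hc hT rfl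
            have h2 := horizB x c T (-T) hxgt hc hT (by ring)
            linarith
    -- strict comparison
    have hxmc : (0:ℝ) < x ^ (-c:ℝ) := Real.rpow_pos_of_pos hx _
    have hstrict : (x^c - x^(-c:ℝ))/(Real.log x * T) + (x^c - x^(-c:ℝ))/(Real.log x * T)
          + 2 * x ^ (-c:ℝ) / (Real.log x * Real.sqrt (c ^ 2 + T ^ 2))
        < 2 * x^c / (Real.log x * T) := by
      have heq : (x^c - x^(-c:ℝ))/(Real.log x * T) + (x^c - x^(-c:ℝ))/(Real.log x * T)
          + 2 * x ^ (-c:ℝ) / (Real.log x * T) = 2 * x^c / (Real.log x * T) := by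
        field_simp
        ring
      have h3 : 2 * x ^ (-c:ℝ) / (Real.log x * Real.sqrt (c ^ 2 + T ^ 2))
          < 2 * x ^ (-c:ℝ) / (Real.log x * T) := by
        apply div_lt_div_of_pos_left (by positivity) (by positivity)
        exact mul_lt_mul_of_pos_left hTK hl
      linarith
    calc (2*Real.pi)⁻¹ * ‖(J - 2 * (Real.pi:ℝ) * Complex.I)‖
        < (2*Real.pi)⁻¹ * (2 * x^c / (Real.log x * T)) := by
          apply mul_lt_mul_of_pos_left (lt_of_le_of_lt hmain hstrict) (by positivity)
      _ = x ^ c / (Real.pi * T * |Real.log x|) := by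
          rw [hlabs]; field_simp
end

section
/- Let x > 1 be real and let T > 0 not be the imaginary part of any nontrivial zero of ζ. Then Σ_{ρ : |Im ρ| < T} x^{Re ρ − 1} = 2 x^{−1} N(T) + 2 (log x) ∫₀¹ N(σ, T) x^{σ−1} dσ, where the sum ranges over the nontrivial zeros ρ of ζ with |Im ρ| < T, counted with multiplicity. -/
/-- A nontrivial zero of the Riemann zeta function: a zero in the critical strip. -/
def IsNontrivialZero (ρ : ℂ) : Prop :=
  riemannZeta ρ = 0 ∧ 0 < ρ.re ∧ ρ.re < 1

open Classical in
/-- The multiplicity of a point as a zero of the Riemann zeta function. -/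
noncomputable def zetaMult (ρ : ℂ) : ℕ :=
  if h : AnalyticAt ℂ riemannZeta ρ then (analyticOrderAt riemannZeta ρ).toNat else 0

open Complex Filter Set MeasureTheory Topology intervalIntegral
open scoped Interval

local notation "conj'" => starRingEnd ℂ

namespace ZetaAux

lemma analyticAt_zeta {s : ℂ} (hs : s ≠ 1) : AnalyticAt ℂ riemannZeta s := by
  rw [Complex.analyticAt_iff_eventually_differentiableAt]
  filter_upwards [isOpen_compl_singleton.eventually_mem
    (show s ∈ ({1}ᶜ : Set ℂ) from hs)] with z hz
  exact differentiableAt_riemannZeta hz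

lemma differentiableAt_conj_conj {f : ℂ → ℂ} {z : ℂ} (hf : DifferentiableAt ℂ f (conj' z)) :
    DifferentiableAt ℂ (fun w => conj' (f (conj' w))) z := by
  set d := deriv f (conj' z) with hd'
  have hd : HasDerivAt f d (conj' z) := hf.hasDerivAt
  have hc : HasDerivAt (fun w => conj' (f (conj' w))) (conj' d) z := by
    rw [hasDerivAt_iff_tendsto] at hd ⊢
    have hconj : Tendsto (fun w : ℂ => conj' w) (𝓝 z) (𝓝 (conj' z)) :=
      (Complex.continuous_conj.tendsto z)
    have h2 := hd.comp hconj
    convert h2 using 1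
    funext w
    simp only [Function.comp_apply]
    have e1 : conj' (f (conj' w)) - conj' (f (conj' z)) - (w - z) • conj' d
        = conj' (f (conj' w) - f (conj' z) - (conj' w - conj' z) • d) := by
      simp only [smul_eq_mul, map_sub, map_mul, Complex.conj_conj]
    congr 1
    · rw [← map_sub, RCLike.norm_conj]
    · rw [e1, RCLike.norm_conj]
  exact hc.differentiableAt

lemma riemannZeta_conj (s : ℂ) : riemannZeta (conj' s) = conj' (riemannZeta s) := by
  by_cases hs : s = 1
  · subst hs
    rw [map_one, riemannZeta_one]
    have hlog : Complex.log (4 * ↑Real.pi) = ((Real.log (4 * Real.pi) : ℝ) : ℂ) := by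
      rw [show ((4:ℂ) * ↑Real.pi) = ((4 * Real.pi : ℝ) : ℂ) by push_cast; ring]
      rw [Complex.ofReal_log (by positivity)]
    rw [hlog]
    simp [map_div₀, conj_ofReal, map_ofNat]
  · have hU : IsPreconnected ({(1:ℂ)}ᶜ : Set ℂ) :=
      (isConnected_compl_singleton_of_one_lt_rank
        (by rw [rank_real_complex]; norm_num) 1).isPreconnected
    have hf : AnalyticOnNhd ℂ riemannZeta {(1:ℂ)}ᶜ := fun z hz => analyticAt_zeta hz
    have hg : AnalyticOnNhd ℂ (fun w => conj' (riemannZeta (conj' w))) {(1:ℂ)}ᶜ := by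
      intro z hz
      rw [Complex.analyticAt_iff_eventually_differentiableAt]
      filter_upwards [isOpen_compl_singleton.eventually_mem hz] with w hw
      refine differentiableAt_conj_conj (differentiableAt_riemannZeta ?_)
      intro h
      exact hw (show w ∈ ({1} : Set ℂ) by
        have := congrArg conj' h
        simpa using this)
    have heq : (fun w => conj' (riemannZeta (conj' w))) =ᶠ[𝓝 (2:ℂ)] riemannZeta := by
      have h2 : {w : ℂ | 1 < w.re} ∈ 𝓝 (2:ℂ) :=
        (Complex.continuous_re.isOpen_preimage _ isOpen_Ioi).mem_nhds (by norm_num)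
      filter_upwards [h2] with w hw
      have hw' : 1 < (conj' w).re := by simpa using hw
      rw [zeta_eq_tsum_one_div_nat_add_one_cpow hw', zeta_eq_tsum_one_div_nat_add_one_cpow hw]
      simp only [starRingEnd_apply]
      rw [tsum_star]
      congr 1
      funext n
      simp only [← starRingEnd_apply, map_div₀, map_one]
      congr 1
      have harg : ((n:ℂ) + 1).arg ≠ Real.pi := by
        rw [show ((n:ℂ) + 1) = (((n:ℝ) + 1 : ℝ) : ℂ) by push_cast; ring]
        rw [Complex.arg_ofReal_of_nonneg (by positivity)]
        exact (Real.pi_ne_zero).symm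
      have := Complex.conj_cpow ((n:ℂ) + 1) w harg
      rw [show conj' ((n:ℂ) + 1) = (n:ℂ) + 1 by simp] at this
      rw [← this]
    have key := hg.eqOn_of_preconnected_of_eventuallyEq hf hU
      (show (2:ℂ) ∈ ({1}ᶜ : Set ℂ) by norm_num) heq
    have := key (show s ∈ ({1}ᶜ : Set ℂ) from hs)
    simp only at this
    rw [← this]
    simp

lemma zeta_order_ne_top {ρ : ℂ} (h1 : ρ ≠ 1) (h : AnalyticAt ℂ riemannZeta ρ) :
    analyticOrderAt riemannZeta ρ ≠ ⊤ := by
  intro htop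
  rw [analyticOrderAt_eq_top] at htop
  have hU : IsPreconnected ({(1:ℂ)}ᶜ : Set ℂ) :=
    (isConnected_compl_singleton_of_one_lt_rank
      (by rw [rank_real_complex]; norm_num) 1).isPreconnected
  have hf : AnalyticOnNhd ℂ riemannZeta {(1:ℂ)}ᶜ := fun z hz => analyticAt_zeta hz
  have hg : AnalyticOnNhd ℂ (fun _ => (0:ℂ)) {(1:ℂ)}ᶜ := fun z _ => analyticAt_const
  have key := hf.eqOn_of_preconnected_of_eventuallyEq hg hU
    (show ρ ∈ ({1}ᶜ : Set ℂ) from h1) htop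
  have h2 := key (show (2:ℂ) ∈ ({1}ᶜ : Set ℂ) by norm_num)
  exact riemannZeta_ne_zero_of_one_lt_re (by norm_num) h2

lemma zetaMult_conj {ρ : ℂ} (h1 : ρ ≠ 1) : zetaMult (conj' ρ) = zetaMult ρ := by
  have h1' : conj' ρ ≠ 1 := by
    intro h
    apply h1
    have := congrArg conj' h
    simpa using this
  have hA : AnalyticAt ℂ riemannZeta ρ := analyticAt_zeta h1
  have hA' : AnalyticAt ℂ riemannZeta (conj' ρ) := analyticAt_zeta h1'
  obtain ⟨n, hn⟩ := WithTop.ne_top_iff_exists.mp (zeta_order_ne_top h1 hA)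
  obtain ⟨g, hg, hg0, hfg⟩ := (hA.analyticOrderAt_eq_natCast (n := n)).mp hn.symm
  have hconj : Tendsto (fun w : ℂ => conj' w) (𝓝 (conj' ρ)) (𝓝 ρ) := by
    have := Complex.continuous_conj.tendsto (conj' ρ)
    simpa using this
  have hres : analyticOrderAt riemannZeta (conj' ρ) = (n : ℕ∞) := by
    refine (hA'.analyticOrderAt_eq_natCast (n := n)).mpr ⟨fun w => conj' (g (conj' w)), ?_, by simpa using hg0, ?_⟩
    · rw [Complex.analyticAt_iff_eventually_differentiableAt]
      have hgd : ∀ᶠ w in 𝓝 ρ, DifferentiableAt ℂ g w :=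
        Complex.analyticAt_iff_eventually_differentiableAt.mp hg
      filter_upwards [hconj.eventually hgd] with w hw
      exact differentiableAt_conj_conj hw
    · filter_upwards [hconj.eventually hfg] with w hw
      calc riemannZeta w = conj' (riemannZeta (conj' w)) := by
            rw [riemannZeta_conj]; simp
        _ = conj' ((conj' w - ρ) ^ n • g (conj' w)) := by rw [hw]
        _ = (w - conj' ρ) ^ n • conj' (g (conj' w)) := by
            simp [smul_eq_mul, map_mul, map_pow, map_sub]
  unfold zetaMult
  rw [dif_pos hA', dif_pos hA, hres, ← hn]
  rfl

/-! ### The eta function and nonvanishing of zeta on the real interval (0,1) -/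

/-- Terms of the Dirichlet eta function, paired. -/
noncomputable def etaTerm (k : ℕ) (s : ℂ) : ℂ :=
  ((2*k+1 : ℕ) : ℂ) ^ (-s) - ((2*k+1+1 : ℕ) : ℂ) ^ (-s)

/-- The Dirichlet eta function (as a sum of consecutive pairs). -/
noncomputable def eta (s : ℂ) : ℂ := ∑' k : ℕ, etaTerm k s

lemma etaTerm_eq_integral {s : ℂ} (hs : s ≠ 0) (k : ℕ) :
    etaTerm k s = s * ∫ x in ((2*k+1 : ℕ) : ℝ)..((2*k+1+1 : ℕ) : ℝ), (x:ℂ) ^ (-s-1) := by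
  have h0 : (0:ℝ) ∉ [[((2*k+1 : ℕ) : ℝ), ((2*k+1+1 : ℕ) : ℝ)]] := by
    apply Set.notMem_uIcc_of_lt <;> positivity
  rw [integral_cpow (Or.inr ⟨by
    intro h
    apply hs
    have : -s - 1 + 1 = -1 + 1 := by rw [h]
    simpa using this, h0⟩)]
  have he : -s - 1 + 1 = -s := by ring
  rw [he]
  unfold etaTerm
  have hne : -s ≠ 0 := neg_ne_zero.mpr hs
  push_cast
  field_simp
  ring

lemma etaTerm_norm_le {s : ℂ} {δ : ℝ} (hδ : 0 < δ) (hs : δ ≤ s.re) (k : ℕ) :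
    ‖etaTerm k s‖ ≤ ‖s‖ * ((2*k+1 : ℕ) : ℝ) ^ (-δ-1) := by
  have hs0 : s ≠ 0 := by
    intro h; rw [h] at hs; simp at hs; linarith
  have ha : (0:ℝ) < ((2*k+1 : ℕ) : ℝ) := by positivity
  rw [etaTerm_eq_integral hs0, norm_mul]
  have hb : ‖∫ x in ((2*k+1 : ℕ) : ℝ)..((2*k+1+1 : ℕ) : ℝ), (x:ℂ) ^ (-s-1)‖
      ≤ ((2*k+1 : ℕ) : ℝ) ^ (-δ-1) * |((2*k+1+1 : ℕ) : ℝ) - ((2*k+1 : ℕ) : ℝ)| := by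
    apply intervalIntegral.norm_integral_le_of_norm_le_const
    intro x hx
    rw [Set.uIoc_of_le (by push_cast; linarith)] at hx
    have hx1 : ((2*k+1 : ℕ) : ℝ) < x := hx.1
    have hx0 : (0:ℝ) < x := lt_trans ha hx1
    rw [Complex.norm_cpow_eq_rpow_re_of_pos hx0]
    have hre : (-s-1).re = -s.re - 1 := by simp
    rw [hre]
    calc x ^ (-s.re - 1) ≤ ((2*k+1 : ℕ) : ℝ) ^ (-s.re - 1) :=
          Real.rpow_le_rpow_of_nonpos ha hx1.le (by linarith)
      _ ≤ ((2*k+1 : ℕ) : ℝ) ^ (-δ - 1) :=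
          Real.rpow_le_rpow_of_exponent_le (by exact_mod_cast Nat.one_le_iff_ne_zero.mpr (by omega))
            (by linarith)
  have habs : |((2*k+1+1 : ℕ) : ℝ) - ((2*k+1 : ℕ) : ℝ)| = 1 := by
    push_cast; norm_num
  rw [habs, mul_one] at hb
  exact mul_le_mul_of_nonneg_left hb (norm_nonneg s)

lemma summable_aux {δ : ℝ} (hδ : 0 < δ) :
    Summable (fun k : ℕ => ((2*k+1 : ℕ) : ℝ) ^ (-δ-1)) := by
  have h1 : Summable (fun n : ℕ => 1 / ((n:ℝ)) ^ (δ+1)) :=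
    Real.summable_one_div_nat_rpow.mpr (by linarith)
  have h2 : Summable (fun n : ℕ => 1 / (((n+1):ℝ)) ^ (δ+1)) := by
    have := (summable_nat_add_iff 1).mpr h1
    refine this.congr fun n => ?_
    push_cast
    ring_nf
  refine Summable.of_nonneg_of_le (fun k => by positivity) (fun k => ?_) h2
  have hk1 : (0:ℝ) < (k:ℝ) + 1 := by positivity
  calc ((2*k+1 : ℕ) : ℝ) ^ (-δ-1) ≤ ((k:ℝ)+1) ^ (-δ-1) := by
        apply Real.rpow_le_rpow_of_nonpos hk1 (by push_cast; linarith) (by linarith)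
    _ = 1 / (((k:ℝ)+1)) ^ (δ+1) := by
        rw [show -δ-1 = -(δ+1) by ring, Real.rpow_neg hk1.le, one_div]

lemma etaTerm_differentiable (k : ℕ) : Differentiable ℂ (etaTerm k) := by
  have h1 : ((2*k+1 : ℕ) : ℂ) ≠ 0 := by exact_mod_cast (by omega : (2*k+1 : ℕ) ≠ 0)
  have h2 : ((2*k+1+1 : ℕ) : ℂ) ≠ 0 := by exact_mod_cast (by omega : (2*k+1+1 : ℕ) ≠ 0)
  exact (differentiable_neg.const_cpow (Or.inl h1)).sub
    (differentiable_neg.const_cpow (Or.inl h2))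

lemma eta_differentiableAt {s₀ : ℂ} (h : 0 < s₀.re) : DifferentiableAt ℂ eta s₀ := by
  set δ := s₀.re / 2 with hδdef
  have hδ : 0 < δ := by positivity
  have hball : ∀ s ∈ Metric.ball s₀ δ, δ ≤ s.re := by
    intro s hs
    rw [Metric.mem_ball] at hs
    have h1 : |(s - s₀).re| ≤ ‖s - s₀‖ := Complex.abs_re_le_norm _
    rw [Complex.dist_eq] at hs
    have : |s.re - s₀.re| < δ := by
      simpa using lt_of_le_of_lt h1 hs
    have := abs_lt.mp this
    simp only [hδdef] at *
    linarith [this.1]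
  have hd : DifferentiableOn ℂ (fun w : ℂ => ∑' k : ℕ, etaTerm k w) (Metric.ball s₀ δ) := by
    refine differentiableOn_tsum_of_summable_norm
      (u := fun k => (‖s₀‖ + δ) * ((2*k+1 : ℕ) : ℝ) ^ (-δ-1))
      ((summable_aux hδ).mul_left _)
      (fun k => (etaTerm_differentiable k).differentiableOn) Metric.isOpen_ball ?_
    intro k w hw
    have h1 : ‖etaTerm k w‖ ≤ ‖w‖ * ((2*k+1 : ℕ) : ℝ) ^ (-δ-1) :=
      etaTerm_norm_le hδ (hball w hw) k
    have h2 : ‖w‖ ≤ ‖s₀‖ + δ := by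
      rw [Metric.mem_ball] at hw
      calc ‖w‖ = ‖s₀ + (w - s₀)‖ := by ring_nf
        _ ≤ ‖s₀‖ + ‖w - s₀‖ := norm_add_le _ _
        _ ≤ ‖s₀‖ + δ := by
            have : ‖w - s₀‖ < δ := by rw [← dist_eq_norm w s₀]; exact hw
            linarith
    calc ‖etaTerm k w‖ ≤ ‖w‖ * ((2*k+1 : ℕ) : ℝ) ^ (-δ-1) := h1
      _ ≤ (‖s₀‖ + δ) * ((2*k+1 : ℕ) : ℝ) ^ (-δ-1) := by
          apply mul_le_mul_of_nonneg_right h2 (by positivity)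
  exact hd.differentiableAt (Metric.isOpen_ball.mem_nhds (Metric.mem_ball_self hδ))

lemma summable_f {s : ℂ} (hs : 1 < s.re) :
    Summable (fun n : ℕ => ((n+1 : ℕ) : ℂ) ^ (-s)) := by
  apply Summable.of_norm
  have h1 : Summable (fun n : ℕ => 1 / ((n:ℝ)) ^ s.re) :=
    Real.summable_one_div_nat_rpow.mpr hs
  have h2 := (summable_nat_add_iff 1).mpr h1
  refine h2.congr fun n => ?_
  have hn : (0:ℝ) < ((n+1 : ℕ) : ℝ) := by positivity
  rw [show ((n+1 : ℕ) : ℂ) = (((n+1 : ℕ) : ℝ) : ℂ) by push_cast; ring]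
  rw [Complex.norm_cpow_eq_rpow_re_of_pos hn]
  simp only [Complex.neg_re]
  rw [Real.rpow_neg hn.le, one_div]

lemma eta_eq_of_one_lt {s : ℂ} (hs : 1 < s.re) :
    eta s = (1 - 2 ^ ((1:ℂ)-s)) * riemannZeta s := by
  set f : ℕ → ℂ := fun n => ((n+1 : ℕ) : ℂ) ^ (-s) with hf
  have hsum : Summable f := summable_f hs
  have he : Summable (fun k => f (2*k)) := hsum.comp_injective (fun a b hab => by omega)
  have ho : Summable (fun k => f (2*k+1)) := hsum.comp_injective (fun a b hab => by omega)
  have hsplit := tsum_even_add_odd he ho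
  have hzeta : riemannZeta s = ∑' n, f n := by
    rw [zeta_eq_tsum_one_div_nat_add_one_cpow hs]
    congr 1
    funext n
    rw [hf]
    simp only []
    rw [Complex.cpow_neg, one_div]
    congr 2
    push_cast
    ring
  have hodd : ∑' k, f (2*k+1) = 2 ^ (-s) * riemannZeta s := by
    rw [hzeta, ← tsum_mul_left]
    congr 1
    funext k
    have key := Complex.mul_cpow_ofReal_nonneg (by norm_num : (0:ℝ) ≤ 2)
      (by positivity : (0:ℝ) ≤ ((k+1 : ℕ) : ℝ)) (-s)
    show ((2*k+1+1 : ℕ) : ℂ) ^ (-s) = 2 ^ (-s) * ((k+1 : ℕ) : ℂ) ^ (-s)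
    rw [show ((2*k+1+1 : ℕ) : ℂ) = ((2:ℝ):ℂ) * (((k+1 : ℕ):ℝ):ℂ) by push_cast; ring]
    rw [key]
    push_cast
    ring
  have heta : eta s = (∑' k, f (2*k)) - ∑' k, f (2*k+1) := by
    unfold eta etaTerm
    exact Summable.tsum_sub he ho
  have h1 : (∑' k, f (2*k)) = riemannZeta s - ∑' k, f (2*k+1) := by
    rw [hzeta, ← hsplit]; ring
  rw [heta, h1, hodd]
  have h2s : (2:ℂ) ^ ((1:ℂ)-s) = 2 * 2 ^ (-s) := by
    rw [show (1:ℂ)-s = 1 + (-s) by ring, Complex.cpow_add _ _ (two_ne_zero), Complex.cpow_one]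
  rw [h2s]
  ring

/-- The domain for the identity theorem. -/
def U : Set ℂ := {s : ℂ | 0 < s.re ∧ s ≠ 1}

lemma isOpen_U : IsOpen U := by
  apply IsOpen.inter
  · exact Complex.continuous_re.isOpen_preimage _ isOpen_Ioi
  · exact isOpen_compl_singleton

lemma preconnected_U : IsPreconnected U := by
  set C1 : Set ℂ := {s | 0 < s.re} ∩ {s | s.re < 1} with hC1
  set C2 : Set ℂ := {s | 1 < s.re} with hC2
  set C3 : Set ℂ := {s | 0 < s.re} ∩ {s | 0 < s.im} with hC3
  set C4 : Set ℂ := {s | 0 < s.re} ∩ {s | s.im < 0} with hC4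
  have p1 : IsPreconnected C1 :=
    ((convex_halfSpace_re_gt 0).inter (convex_halfSpace_re_lt 1)).isPreconnected
  have p2 : IsPreconnected C2 := (convex_halfSpace_re_gt 1).isPreconnected
  have p3 : IsPreconnected C3 :=
    ((convex_halfSpace_re_gt 0).inter (convex_halfSpace_im_gt 0)).isPreconnected
  have p4 : IsPreconnected C4 :=
    ((convex_halfSpace_re_gt 0).inter (convex_halfSpace_im_lt 0)).isPreconnected
  have m1 : (⟨1/2, 1/2⟩ : ℂ) ∈ C1 := by constructor <;> norm_num [Complex.ofReal_re]
  have m13 : (⟨1/2, 1/2⟩ : ℂ) ∈ C3 := by constructor <;> norm_num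
  have pA : IsPreconnected (C1 ∪ C3) := p1.union _ m1 m13 p3
  have m14 : (⟨1/2, -(1/2)⟩ : ℂ) ∈ C1 ∪ C3 := Or.inl (by constructor <;> norm_num)
  have m4 : (⟨1/2, -(1/2)⟩ : ℂ) ∈ C4 := by constructor <;> norm_num
  have pB : IsPreconnected (C1 ∪ C3 ∪ C4) := pA.union _ m14 m4 p4
  have m23 : (⟨2, 1⟩ : ℂ) ∈ C1 ∪ C3 ∪ C4 := Or.inl (Or.inr (by constructor <;> norm_num))
  have m2 : (⟨2, 1⟩ : ℂ) ∈ C2 := by norm_num [hC2]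
  have pC : IsPreconnected (C1 ∪ C3 ∪ C4 ∪ C2) := pB.union _ m23 m2 p2
  have hUeq : U = C1 ∪ C3 ∪ C4 ∪ C2 := by
    ext s
    simp only [U, hC1, hC2, hC3, hC4, Set.mem_union, Set.mem_inter_iff, Set.mem_setOf_eq]
    constructor
    · rintro ⟨hre, hne⟩
      rcases lt_trichotomy s.im 0 with him | him | him
      · exact Or.inl (Or.inr ⟨hre, him⟩)
      · rcases lt_trichotomy s.re 1 with h1 | h1 | h1
        · exact Or.inl (Or.inl (Or.inl ⟨hre, h1⟩))
        · exact absurd (Complex.ext h1 him) hne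
        · exact Or.inr h1
      · exact Or.inl (Or.inl (Or.inr ⟨hre, him⟩))
    · rintro (((⟨h1, h2⟩ | ⟨h1, h2⟩) | ⟨h1, h2⟩) | h1)
      · exact ⟨h1, fun h => by rw [h] at h2; simp at h2⟩
      · exact ⟨h1, fun h => by rw [h] at h2; simp at h2⟩
      · exact ⟨h1, fun h => by rw [h] at h2; simp at h2⟩
      · refine ⟨lt_trans one_pos h1, fun h => by rw [h] at h1; simp at h1⟩
  rw [hUeq]
  exact pC

lemma eta_eq_on_U : ∀ s ∈ U, eta s = (1 - 2 ^ ((1:ℂ)-s)) * riemannZeta s := by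
  have hg : AnalyticOnNhd ℂ (fun s => (1 - 2 ^ ((1:ℂ)-s)) * riemannZeta s) U := by
    apply DifferentiableOn.analyticOnNhd _ isOpen_U
    intro z hz
    apply DifferentiableAt.differentiableWithinAt
    refine DifferentiableAt.mul ?_ (differentiableAt_riemannZeta hz.2)
    apply DifferentiableAt.sub (differentiableAt_const 1)
    exact DifferentiableAt.const_cpow ((differentiableAt_const 1).sub differentiableAt_id)
      (Or.inl two_ne_zero)
  have hfa : AnalyticOnNhd ℂ eta U := by
    apply DifferentiableOn.analyticOnNhd _ isOpen_U
    exact fun z hz => (eta_differentiableAt hz.1).differentiableWithinAt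
  have h2U : (2:ℂ) ∈ U := ⟨by norm_num, by norm_num⟩
  have heq : eta =ᶠ[𝓝 (2:ℂ)] (fun s => (1 - 2 ^ ((1:ℂ)-s)) * riemannZeta s) := by
    have h2 : {w : ℂ | 1 < w.re} ∈ 𝓝 (2:ℂ) :=
      (Complex.continuous_re.isOpen_preimage _ isOpen_Ioi).mem_nhds (by norm_num)
    filter_upwards [h2] with w hw
    exact eta_eq_of_one_lt hw
  exact hfa.eqOn_of_preconnected_of_eventuallyEq hg preconnected_U h2U heq

lemma riemannZeta_ofReal_ne_zero {σ : ℝ} (h0 : 0 < σ) (h1 : σ < 1) :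
    riemannZeta (σ : ℂ) ≠ 0 := by
  have hU : (σ : ℂ) ∈ U := by
    refine ⟨by simpa using h0, ?_⟩
    intro h
    rw [show (1:ℂ) = ((1:ℝ):ℂ) by norm_num] at h
    exact absurd (Complex.ofReal_inj.mp h) (ne_of_lt h1)
  have heq := eta_eq_on_U _ hU
  intro hz
  rw [hz, mul_zero] at heq
  -- eta σ is the sum of a positive real series
  set g : ℕ → ℝ := fun k => ((2*k+1 : ℕ) : ℝ) ^ (-σ) - ((2*k+1+1 : ℕ) : ℝ) ^ (-σ) with hg
  have hterm : ∀ k, etaTerm k (σ : ℂ) = ((g k : ℝ) : ℂ) := by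
    intro k
    unfold etaTerm
    rw [hg]
    rw [show ((2*k+1 : ℕ) : ℂ) = (((2*k+1 : ℕ) : ℝ) : ℂ) by push_cast; ring]
    rw [show ((2*k+1+1 : ℕ) : ℂ) = (((2*k+1+1 : ℕ) : ℝ) : ℂ) by push_cast; ring]
    rw [show -((σ:ℝ):ℂ) = ((-σ : ℝ) : ℂ) by push_cast; ring]
    rw [← Complex.ofReal_cpow (by positivity) (-σ), ← Complex.ofReal_cpow (by positivity) (-σ)]
    norm_cast
  have hgnonneg : ∀ k, 0 ≤ g k := by
    intro k
    rw [hg]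
    simp only [sub_nonneg]
    apply Real.rpow_le_rpow_of_nonpos (by positivity) (by push_cast; linarith) (by linarith)
  have hgsum : Summable g := by
    refine Summable.of_nonneg_of_le hgnonneg (fun k => ?_)
      ((summable_aux h0).mul_left ‖(σ:ℂ)‖)
    have hb := etaTerm_norm_le h0 (le_of_eq (Complex.ofReal_re σ).symm) k
    calc g k ≤ |g k| := le_abs_self _
      _ = ‖etaTerm k (σ:ℂ)‖ := by rw [hterm k, Complex.norm_real, Real.norm_eq_abs]
      _ ≤ ‖(σ:ℂ)‖ * ((2*k+1 : ℕ) : ℝ) ^ (-σ-1) := hb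
  have hpos : 0 < ∑' k, g k := by
    refine Summable.tsum_pos hgsum hgnonneg 0 ?_
    rw [hg]
    have e1 : ((2*0+1 : ℕ) : ℝ) = 1 := by norm_num
    have e2 : ((2*0+1+1 : ℕ) : ℝ) = 2 := by norm_num
    simp only [e1, e2, Real.one_rpow]
    have : (2:ℝ) ^ (-σ) < 1 :=
      Real.rpow_lt_one_of_one_lt_of_neg (by norm_num) (by linarith)
    linarith
  have hetaσ : eta (σ:ℂ) = ((∑' k, g k : ℝ) : ℂ) := by
    unfold eta
    rw [Complex.ofReal_tsum]
    congr 1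
    funext k
    exact hterm k
  rw [hetaσ] at heq
  have : (∑' k, g k : ℝ) = 0 := by exact_mod_cast heq
  linarith

lemma im_ne_zero_of_nontrivialZero {ρ : ℂ} (h : IsNontrivialZero ρ) : ρ.im ≠ 0 := by
  intro him
  have hρ : ρ = ((ρ.re : ℝ) : ℂ) := Complex.ext (by simp) (by simp [him])
  apply riemannZeta_ofReal_ne_zero h.2.1 h.2.2
  rw [← hρ]
  exact h.1

section Calc

variable {x : ℝ}

lemma continuous_xpow (hx : 0 < x) : Continuous fun σ : ℝ => x ^ (σ - 1) := by
  have h : (fun σ : ℝ => x ^ (σ - 1)) = fun σ => Real.exp ((σ-1) * Real.log x) := by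
    funext σ; rw [Real.rpow_def_of_pos hx, mul_comm]
  rw [h]
  exact Real.continuous_exp.comp ((continuous_id.sub continuous_const).mul continuous_const)

lemma intervalIntegrable_ind (hx : 0 < x) (β : ℝ) :
    IntervalIntegrable (fun σ => if σ < β then x ^ (σ-1) else 0) volume 0 1 := by
  have hind : (fun σ : ℝ => if σ < β then x ^ (σ-1) else 0)
      = Set.indicator (Set.Iio β) (fun σ => x ^ (σ-1)) := by
    funext σ; rw [Set.indicator_apply]; simp [Set.mem_Iio]
  rw [hind, intervalIntegrable_iff]
  exact (intervalIntegrable_iff.mp ((continuous_xpow hx).intervalIntegrable 0 1)).indicator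
    measurableSet_Iio

lemma integral_ind (hx : 1 < x) {β : ℝ} (h0 : 0 < β) (h1 : β < 1) :
    (∫ σ in (0:ℝ)..1, (if σ < β then x ^ (σ-1) else 0))
      = (x ^ (β-1) - x⁻¹) / Real.log x := by
  have hx0 : (0:ℝ) < x := lt_trans one_pos hx
  have hlog : Real.log x ≠ 0 := ne_of_gt (Real.log_pos hx)
  rw [intervalIntegral.integral_congr
    (g := Set.indicator (Set.Iio β) (fun σ => x ^ (σ-1)))
    (fun σ _ => by rw [Set.indicator_apply]; simp [Set.mem_Iio])]
  rw [intervalIntegral.integral_of_le (by norm_num : (0:ℝ) ≤ 1)]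
  rw [MeasureTheory.setIntegral_indicator measurableSet_Iio]
  have hset : Set.Ioc (0:ℝ) 1 ∩ Set.Iio β = Set.Ioo 0 β := by
    ext t
    simp only [Set.mem_inter_iff, Set.mem_Ioc, Set.mem_Iio, Set.mem_Ioo]
    constructor
    · rintro ⟨⟨ht0, _⟩, htβ⟩; exact ⟨ht0, htβ⟩
    · rintro ⟨ht0, htβ⟩; exact ⟨⟨ht0, le_trans htβ.le h1.le⟩, htβ⟩
  rw [hset, ← MeasureTheory.integral_Ioc_eq_integral_Ioo,
    ← intervalIntegral.integral_of_le h0.le]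
  have hderiv : ∀ σ ∈ Set.uIcc (0:ℝ) β,
      HasDerivAt (fun t => x ^ (t-1) / Real.log x) (x ^ (σ-1)) σ := by
    intro σ _
    have h1' : HasDerivAt (fun t : ℝ => (t-1) * Real.log x) (Real.log x) σ := by
      simpa using ((hasDerivAt_id σ).sub_const 1).mul_const (Real.log x)
    have h2' : HasDerivAt (fun t : ℝ => Real.exp ((t-1) * Real.log x))
        (Real.exp ((σ-1) * Real.log x) * Real.log x) σ := h1'.exp
    have heq : (fun t : ℝ => x ^ (t-1) / Real.log x)
        = fun t => Real.exp ((t-1) * Real.log x) / Real.log x := by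
      funext t; rw [Real.rpow_def_of_pos hx0, mul_comm]
    rw [heq]
    have h3' := h2'.div_const (Real.log x)
    have hval : x ^ (σ-1) = Real.exp ((σ-1) * Real.log x) * Real.log x / Real.log x := by
      rw [Real.rpow_def_of_pos hx0, mul_comm]
      field_simp
    rw [hval]
    exact h3'
  rw [intervalIntegral.integral_eq_sub_of_hasDerivAt hderiv
    ((continuous_xpow hx0).intervalIntegrable 0 β)]
  rw [show ((0:ℝ)-1) = (-1:ℝ) by norm_num, Real.rpow_neg_one]
  ring

end Calc

end ZetaAux

lemma mem_S_conj {T : ℝ} {hfin : {ρ : ℂ | IsNontrivialZero ρ ∧ |ρ.im| < T}.Finite}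
    {ρ : ℂ} (h : ρ ∈ hfin.toFinset) : conj' ρ ∈ hfin.toFinset := by
  rw [Set.Finite.mem_toFinset] at h ⊢
  obtain ⟨⟨hz, h0, h1⟩, hT⟩ := h
  refine ⟨⟨?_, by simpa using h0, by simpa using h1⟩, ?_⟩
  · rw [ZetaAux.riemannZeta_conj, hz, map_zero]
  · simpa [abs_neg] using hT

lemma ne_one_of_mem_S {T : ℝ} {hfin : {ρ : ℂ | IsNontrivialZero ρ ∧ |ρ.im| < T}.Finite}
    {ρ : ℂ} (h : ρ ∈ hfin.toFinset) : ρ ≠ 1 := by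
  rw [Set.Finite.mem_toFinset] at h
  intro he
  have := h.1.2.2
  rw [he] at this
  simp at this

set_option maxHeartbeats 1000000 in
open Classical in
theorem sum_x_pow_re_sub_one_eq (x T : ℝ) (hx : x > 1) (hT : T > 0)
    (hTord : ∀ ρ : ℂ, IsNontrivialZero ρ → ρ.im ≠ T)
    (hfin : {ρ : ℂ | IsNontrivialZero ρ ∧ |ρ.im| < T}.Finite) :
    ∑ ρ ∈ hfin.toFinset, (zetaMult ρ : ℝ) * x ^ (ρ.re - 1)
      = 2 * x⁻¹ * ((∑ ρ ∈ hfin.toFinset.filter fun ρ => 0 < ρ.im, zetaMult ρ : ℕ) : ℝ)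
        + 2 * Real.log x * ∫ σ in (0 : ℝ)..1,
            ((∑ ρ ∈ hfin.toFinset.filter fun ρ => 0 < ρ.im ∧ σ < ρ.re,
              zetaMult ρ : ℕ) : ℝ) * x ^ (σ - 1) := by
  have hx0 : (0:ℝ) < x := lt_trans one_pos hx
  have hlogpos : 0 < Real.log x := Real.log_pos hx
  have hlogne : Real.log x ≠ 0 := ne_of_gt hlogpos
  set S := hfin.toFinset with hSdef
  have hmemS : ∀ ρ, ρ ∈ S → IsNontrivialZero ρ ∧ |ρ.im| < T :=
    fun ρ h => hfin.mem_toFinset.mp h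
  -- Step 1: computing the integral
  have hI : (∫ σ in (0:ℝ)..1,
        ((∑ ρ ∈ S.filter fun ρ => 0 < ρ.im ∧ σ < ρ.re, zetaMult ρ : ℕ) : ℝ) * x ^ (σ - 1))
      = ∑ ρ ∈ S.filter (fun ρ => 0 < ρ.im),
          (zetaMult ρ : ℝ) * ((x ^ (ρ.re - 1) - x⁻¹) / Real.log x) := by
    have hrw : ∀ σ : ℝ,
        ((∑ ρ ∈ S.filter fun ρ => 0 < ρ.im ∧ σ < ρ.re, zetaMult ρ : ℕ) : ℝ) * x ^ (σ - 1)
        = ∑ ρ ∈ S.filter (fun ρ => 0 < ρ.im),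
            (zetaMult ρ : ℝ) * (if σ < ρ.re then x ^ (σ-1) else 0) := by
      intro σ
      rw [← Finset.filter_filter]
      push_cast
      rw [Finset.sum_mul, Finset.sum_filter]
      refine Finset.sum_congr rfl fun ρ _ => ?_
      by_cases h : σ < ρ.re <;> simp [h]
    rw [intervalIntegral.integral_congr
      (g := fun σ => ∑ ρ ∈ S.filter (fun ρ => 0 < ρ.im),
        (zetaMult ρ : ℝ) * (if σ < ρ.re then x ^ (σ-1) else 0))
      (fun σ _ => hrw σ)]
    have hswap := intervalIntegral.integral_finset_sum (μ := volume) (a := (0:ℝ)) (b := 1)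
      (s := S.filter (fun ρ => 0 < ρ.im))
      (f := fun ρ σ => (zetaMult ρ : ℝ) * (if σ < ρ.re then x ^ (σ-1) else 0))
      (fun ρ _ => (ZetaAux.intervalIntegrable_ind hx0 ρ.re).const_mul _)
    rw [hswap]
    refine Finset.sum_congr rfl fun ρ hρ => ?_
    rw [intervalIntegral.integral_const_mul]
    obtain ⟨⟨hz, hre0, hre1⟩, _⟩ := hmemS ρ (Finset.mem_filter.mp hρ).1
    rw [ZetaAux.integral_ind hx hre0 hre1]
  -- Step 2: pairing zeros with their conjugates
  have hpair : (∑ ρ ∈ S, (zetaMult ρ : ℝ) * x ^ (ρ.re - 1))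
      = 2 * ∑ ρ ∈ S.filter (fun ρ => 0 < ρ.im), (zetaMult ρ : ℝ) * x ^ (ρ.re - 1) := by
    have hsplit := Finset.sum_filter_add_sum_filter_not S (fun ρ => 0 < ρ.im)
      (fun ρ => (zetaMult ρ : ℝ) * x ^ (ρ.re - 1))
    have hneg : (∑ ρ ∈ S.filter (fun ρ => ¬ 0 < ρ.im), (zetaMult ρ : ℝ) * x ^ (ρ.re - 1))
        = ∑ ρ ∈ S.filter (fun ρ => 0 < ρ.im), (zetaMult ρ : ℝ) * x ^ (ρ.re - 1) := by
      refine Finset.sum_nbij' (i := fun ρ => conj' ρ) (j := fun ρ => conj' ρ) ?_ ?_ ?_ ?_ ?_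
      · intro ρ hρ
        rw [Finset.mem_filter] at hρ ⊢
        obtain ⟨hS, him⟩ := hρ
        have hne : ρ.im ≠ 0 := ZetaAux.im_ne_zero_of_nontrivialZero (hmemS ρ hS).1
        refine ⟨mem_S_conj hS, ?_⟩
        simp only [Complex.conj_im]
        cases' lt_or_gt_of_ne hne with h h
        · linarith
        · exact absurd h him
      · intro ρ hρ
        rw [Finset.mem_filter] at hρ ⊢
        obtain ⟨hS, him⟩ := hρ
        refine ⟨mem_S_conj hS, ?_⟩
        simp only [Complex.conj_im]
        intro hcon
        linarith
      · intro ρ _; simp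
      · intro ρ _; simp
      · intro ρ hρ
        rw [Finset.mem_filter] at hρ
        have h1 : ρ ≠ 1 := ne_one_of_mem_S hρ.1
        rw [ZetaAux.zetaMult_conj h1]
        simp only [Complex.conj_re]
    linarith
  rw [hpair, hI]
  push_cast
  rw [Finset.mul_sum, Finset.mul_sum, Finset.mul_sum, ← Finset.sum_add_distrib]
  refine Finset.sum_congr rfl fun ρ _ => ?_
  field_simp
  ring
end
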